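/- Let R be a reduced commutative ring which has finite Goldie dimension as a module over itself. Then R has only finitely many minimal prime ideals. -/

import Mathlib

universe u

/-- A ring is *coherent* if every finitely generated ideal is finitely presented. -/
def IsCoherentRing (R : Type u) [CommRing R] : Prop :=
  ∀ I : Ideal R, I.FG → Module.FinitePresentation R I

/-- A ring is *semicoherent* if `Hom_R(E, F)` is (isomorphic to) a submodule of a flat module
for every pair of injective modules `E`, `F`. -/
def IsSemicoherentRing (R : Type u) [CommRing R] : Prop :=
  ∀ (E F : Type u) [AddCommGroup E] [Module R E] [AddCommGroup F] [Module R F],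
    Module.Injective R E → Module.Injective R F →
      ∃ G : ModuleCat.{u} R, Module.Flat R G ∧
        ∃ i : (E →ₗ[R] F) →ₗ[R] G, Function.Injective i

/-- An `R`-module `E` is *FP-injective* if `Ext¹_R(F, E) = 0` for every finitely
presented `R`-module `F`. -/
def IsFPInjective (R : Type u) [CommRing R] (E : Type u) [AddCommGroup E] [Module R E] : Prop :=
  ∀ (F : Type u) [AddCommGroup F] [Module R F], Module.FinitePresentation R F →
    Subsingleton (((Ext R (ModuleCat.{u} R) 1).obj
      (Opposite.op (ModuleCat.of R F))).obj (ModuleCat.of R E))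

/-- A ring is an *IF-ring* if every injective module over it is flat. -/
def IsIFRing (R : Type u) [CommRing R] : Prop :=
  ∀ (M : Type u) [AddCommGroup M] [Module R M], Module.Injective R M → Module.Flat R M

/-- `f : M →ₗ[R] E` exhibits `E` as an injective hull of `M`: `E` is injective and
`f` embeds `M` as an essential submodule of `E`. -/
def IsInjectiveHull (R : Type u) [CommRing R] (M E : Type u) [AddCommGroup M] [Module R M]
    [AddCommGroup E] [Module R E] (f : M →ₗ[R] E) : Prop :=
  Module.Injective R E ∧ Function.Injective f ∧
    ∀ N : Submodule R E, N ≠ ⊥ → N ⊓ LinearMap.range f ≠ ⊥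

/-- A module is indecomposable if it is nonzero and not the direct sum
of two nonzero submodules. -/
def IsIndecomposableModule (R : Type u) [CommRing R] (M : Type u) [AddCommGroup M]
    [Module R M] : Prop :=
  Nontrivial M ∧ ∀ A B : Submodule R M, IsCompl A B → A = ⊥ ∨ B = ⊥

/-- A module has *finite Goldie dimension* if its injective hull is a finite direct
sum of indecomposable injective modules. -/
def HasFiniteGoldieDimension (R : Type u) [CommRing R] (M : Type u) [AddCommGroup M]
    [Module R M] : Prop :=
  ∃ (E : ModuleCat.{u} R) (f : M →ₗ[R] E), IsInjectiveHull R M E f ∧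
    ∃ (n : ℕ) (D : Fin n → Submodule R E), DirectSum.IsInternal D ∧
      ∀ i, Module.Injective R (D i) ∧ IsIndecomposableModule R (D i)

/-- A commutative ring is a *valuation ring* (uniserial) if its ideals are totally
ordered by inclusion. -/
def IsChainRing (R : Type u) [CommRing R] : Prop :=
  ∀ I J : Ideal R, I ≤ J ∨ J ≤ I

/-- A commutative ring is *arithmetical* if all its localizations at maximal ideals are
valuation rings. -/
def IsArithmetical (R : Type u) [CommRing R] : Prop :=
  ∀ (P : Ideal R) (hP : P.IsMaximal),
    haveI := hP.isPrime
    IsChainRing (Localization.AtPrime P)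

/-- An `R`-module `M` is *finitely injective* if every homomorphism `A → M` from a finitely
generated submodule `A` of an arbitrary module `B` extends to `B`. -/
def IsFinitelyInjective (R : Type u) [CommRing R] (M : Type u) [AddCommGroup M]
    [Module R M] : Prop :=
  ∀ (B : Type u) [AddCommGroup B] [Module R B] (A : Submodule R B), A.FG →
    ∀ f : A →ₗ[R] M, ∃ g : B →ₗ[R] M, ∀ a : A, g a = f a

/-- A domain has *finite character* if every nonzero element lies in only finitely many
maximal ideals. -/
def FiniteCharacter (R : Type u) [CommRing R] : Prop :=
  ∀ r : R, r ≠ 0 → {P : Ideal R | P.IsMaximal ∧ r ∈ P}.Finite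

/-!
Write the injective hull of `R` as `E = D₁ ⊕ ⋯ ⊕ Dₙ` with `Dᵢ` indecomposable injective.
An indecomposable injective module is uniform: if `H` and `K` are disjoint submodules, each
maximal among those disjoint from the other, then extending the projection `H ⊕ K → H` to an
endomorphism `π` of the injective module gives `range π = H`, so `H` is a direct summand.
Hence each ideal `Iᵢ = R ∩ Dᵢ` is uniform, and in a reduced ring the annihilator of a nonzero
uniform ideal is prime. The sum of the `Iᵢ` is essential in `R`, so reducedness forces
`⋂ ann Iᵢ = ann (∑ Iᵢ) = 0`. Every minimal prime therefore contains, and so equals, one of the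
`n` primes `ann Iᵢ`.
-/

section

variable {α : Type*}

def IsEssentialIn [Lattice α] [OrderBot α] (a b : α) : Prop :=
  a ≤ b ∧ ∀ c ≤ b, Disjoint c a → c = ⊥

namespace IsEssentialIn

section Lattice

variable [Lattice α] [OrderBot α] {a b c : α}

theorem trans (hab : IsEssentialIn a b) (hbc : IsEssentialIn b c) : IsEssentialIn a c :=
  ⟨hab.1.trans hbc.1, fun d hdc hda ↦ by
    have : d ⊓ b = ⊥ := hab.2 _ inf_le_right (hda.mono_left inf_le_left)
    exact hbc.2 d hdc (disjoint_iff.mpr this)⟩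

theorem inf_of_le (hac : IsEssentialIn a c) (hbc : b ≤ c) : IsEssentialIn (a ⊓ b) b :=
  ⟨inf_le_right, fun d hdb hd ↦ hac.2 d (hdb.trans hbc) <| by
    rw [disjoint_iff, ← inf_eq_left.mpr hdb, inf_assoc, inf_comm b, ← disjoint_iff]
    exact hd⟩

theorem le_of_maximal_disjoint (hab : IsEssentialIn a b) (ha : Maximal (Disjoint · c) a) :
    b ≤ a :=
  ha.2 (disjoint_iff.mpr <| hab.2 _ inf_le_left (ha.1.symm.mono_left inf_le_right)) hab.1

end Lattice

section Modular

variable [Lattice α] [OrderBot α] [IsModularLattice α] {a b c : α}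

theorem sup_right (hab : IsEssentialIn a b) (hbc : Disjoint b c) :
    IsEssentialIn (a ⊔ c) (b ⊔ c) := by
  refine ⟨sup_le_sup_right hab.1 c, fun d hd hda ↦ ?_⟩
  have hacd : Disjoint a (c ⊔ d) :=
    (hbc.mono_left hab.1).disjoint_sup_right_of_disjoint_sup_left hda.symm
  have hbcd : b ⊓ (c ⊔ d) = ⊥ := hab.2 _ inf_le_left (hacd.symm.mono_left inf_le_right)
  have hdbc : Disjoint d (c ⊔ b) :=
    (hda.mono_right le_sup_right).disjoint_sup_right_of_disjoint_sup_left
      (by rw [sup_comm, disjoint_comm, disjoint_iff]; exact hbcd)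
  exact hdbc.eq_bot_of_le (sup_comm b c ▸ hd)

theorem sup {a₁ a₂ b₁ b₂ : α} (h₁ : IsEssentialIn a₁ b₁) (h₂ : IsEssentialIn a₂ b₂)
    (hb : Disjoint b₁ b₂) : IsEssentialIn (a₁ ⊔ a₂) (b₁ ⊔ b₂) := by
  have h₂' : IsEssentialIn (a₁ ⊔ a₂) (a₁ ⊔ b₂) := by
    simpa only [sup_comm a₁] using h₂.sup_right (hb.symm.mono_right h₁.1)
  exact h₂'.trans (h₁.sup_right hb)

theorem finset_sup {ι : Type*} {s : Finset ι} {a b : ι → α}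
    (h : ∀ i ∈ s, IsEssentialIn (a i) (b i)) (hs : s.SupIndep b) :
    IsEssentialIn (s.sup a) (s.sup b) := by
  induction s using Finset.cons_induction with
  | empty => exact ⟨le_rfl, fun d hd _ ↦ le_bot_iff.mp hd⟩
  | cons i s hi ih =>
    rw [Finset.sup_cons, Finset.sup_cons]
    refine (h i (Finset.mem_cons_self i s)).sup
      (ih (fun j hj ↦ h j (Finset.mem_cons_of_mem hj)) (hs.subset (Finset.subset_cons hi))) ?_
    exact hs (Finset.subset_cons hi) (Finset.mem_cons_self i s) hi

end Modular

end IsEssentialIn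

theorem exists_le_maximal_disjoint [CompleteLattice α] [IsCompactlyGenerated α] {a b : α}
    (hab : Disjoint a b) : ∃ c, a ≤ c ∧ Maximal (Disjoint · b) c :=
  zorn_le_nonempty₀ {x | Disjoint x b} (fun c hc hchain _ _ ↦
    ⟨sSup c, (hchain.directedOn.disjoint_sSup_left).mpr hc, fun _ hz ↦ le_sSup hz⟩) a hab

end

namespace Submodule

section Ring

variable {R : Type*} [Ring R] {M M' : Type*} [AddCommGroup M] [Module R M]
  [AddCommGroup M'] [Module R M'] {f : M →ₗ[R] M'}

theorem isEssentialIn_comap {A V : Submodule R M'} (h : IsEssentialIn A V)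
    (hf : Function.Injective f) : IsEssentialIn (A.comap f) (V.comap f) := by
  refine ⟨comap_mono h.1, fun N hN hNA ↦ map_injective_of_injective hf ?_⟩
  rw [map_bot]
  refine h.2 _ (map_le_iff_le_comap.mpr hN) (disjoint_def.mpr ?_)
  rintro _ ⟨x, hx, rfl⟩ hxA
  rw [disjoint_def.mp hNA x hx hxA, map_zero]

def IsUniform (N : Submodule R M) : Prop :=
  ∀ A ≤ N, ∀ B ≤ N, Disjoint A B → A = ⊥ ∨ B = ⊥

theorem IsUniform.comap {N : Submodule R M'} (h : N.IsUniform) (hf : Function.Injective f) :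
    (N.comap f).IsUniform := by
  intro A hA B hB hAB
  have hbot : ∀ X : Submodule R M, X.map f = ⊥ → X = ⊥ :=
    fun X h₀ ↦ map_injective_of_injective hf (h₀.trans (map_bot f).symm)
  exact (h _ (map_le_iff_le_comap.mpr hA) _ (map_le_iff_le_comap.mpr hB)
    (disjoint_map hf hAB)).imp (hbot A) (hbot B)

theorem IsUniform.map {N : Submodule R M} (h : N.IsUniform) (hf : Function.Injective f) :
    (N.map f).IsUniform := by
  intro A hA B hB hAB
  have hmap : ∀ X ≤ N.map f, (X.comap f).map f = X :=
    fun X hX ↦ map_comap_eq_self (hX.trans LinearMap.map_le_range)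
  have hcomap : ∀ X ≤ N.map f, X.comap f ≤ N :=
    fun X hX ↦ (comap_mono hX).trans (comap_map_eq_of_injective hf N).le
  have hdisj : Disjoint (A.comap f) (B.comap f) := by
    rw [disjoint_iff, ← comap_inf, hAB.eq_bot, comap_bot, LinearMap.ker_eq_bot.mpr hf]
  exact (h _ (hcomap A hA) _ (hcomap B hB) hdisj).imp
    (fun h₀ ↦ by rw [← hmap A hA, h₀, map_bot]) (fun h₀ ↦ by rw [← hmap B hB, h₀, map_bot])

theorem isEssentialIn_iSup_comap {ι : Type*} [Finite ι] {D : ι → Submodule R M'}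
    (hD : iSupIndep D) (hDtop : ⨆ i, D i = ⊤) (hf : Function.Injective f)
    (hrange : IsEssentialIn (LinearMap.range f) ⊤) :
    IsEssentialIn (⨆ i, (D i).comap f) ⊤ := by
  have := Fintype.ofFinite ι
  have hsum := IsEssentialIn.finset_sup (s := Finset.univ) (fun i _ ↦ hrange.inf_of_le le_top)
    (hD.supIndep' _)
  rw [Finset.sup_univ_eq_iSup, Finset.sup_univ_eq_iSup, hDtop] at hsum
  rw [show ⨆ i, LinearMap.range f ⊓ D i = map f (⨆ i, (D i).comap f) by
    simp_rw [map_iSup, map_comap_eq]] at hsum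
  simpa only [comap_map_eq_of_injective hf, comap_top] using isEssentialIn_comap hsum hf

end Ring

theorem exists_isCompl_of_maximal_disjoint {R M : Type u} [Ring R] [AddCommGroup M] [Module R M]
    [Module.Injective R M] {H K : Submodule R M} (hH : Maximal (Disjoint · K) H)
    (hK : Maximal (Disjoint · H) K) : ∃ C, IsCompl H C ∧ K ≤ C := by
  have hinj : Function.Injective (H.subtype.coprod K.subtype) := by
    rw [← LinearMap.ker_eq_bot, LinearMap.ker_coprod_of_disjoint_range _ _ (by simpa using hH.1)]
    simp
  obtain ⟨π, hπ⟩ := Module.Injective.extension_property R M (H × K) M _ hinj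
    (H.subtype ∘ₗ LinearMap.fst R H K)
  have hπH : ∀ x ∈ H, π x = x := fun x hx ↦ by simpa using congr($hπ (⟨x, hx⟩, 0))
  have hπK : ∀ x ∈ K, π x = 0 := fun x hx ↦ by simpa using congr($hπ (0, ⟨x, hx⟩))
  have hess : IsEssentialIn H (LinearMap.range π) := by
    refine ⟨fun x hx ↦ ⟨x, hπH x hx⟩, fun N hN hNH ↦ eq_bot_iff.mpr fun y hy ↦ ?_⟩
    have hKN : K ≤ N.comap π := fun x hx ↦ by simp [hπK x hx]
    have hHN : Disjoint (N.comap π) H := disjoint_def.mpr fun x hxN hxH ↦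
      disjoint_def.mp hNH x (hπH x hxH ▸ hxN) hxH
    obtain ⟨x, rfl⟩ := hN hy
    exact (mem_bot R).mpr (hπK x (hK.2 hHN hKN hy))
  have hπ_mem : ∀ x, π x ∈ H := fun x ↦ hess.le_of_maximal_disjoint hH ⟨x, rfl⟩
  refine ⟨LinearMap.ker π, ?_, fun x hx ↦ hπK x hx⟩
  simpa only [LinearMap.ker_codRestrict] using
    LinearMap.isCompl_of_proj (f := π.codRestrict H hπ_mem) fun x ↦ Subtype.ext (hπH x x.2)

end Submodule

theorem IsIndecomposableModule.isUniform_top {R M : Type u} [CommRing R] [AddCommGroup M]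
    [Module R M] [Module.Injective R M] (h : IsIndecomposableModule R M) :
    (⊤ : Submodule R M).IsUniform := by
  intro A _ B _ hAB
  obtain ⟨H, hAH, hH⟩ := exists_le_maximal_disjoint hAB
  obtain ⟨K, hBK, hK⟩ := exists_le_maximal_disjoint hH.1.symm
  have hH' : Maximal (Disjoint · K) H := ⟨hK.1.symm, fun X hX hHX ↦ hH.2 (hX.mono_right hBK) hHX⟩
  obtain ⟨C, hHC, hKC⟩ := Submodule.exists_isCompl_of_maximal_disjoint hH' hK
  rcases h.2 H C hHC with h₀ | h₀
  · exact .inl (le_bot_iff.mp (h₀ ▸ hAH))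
  · exact .inr (le_bot_iff.mp (h₀ ▸ hBK.trans hKC))

namespace Submodule

variable {R : Type*} [CommRing R] [IsReduced R] {I : Ideal R}

theorem IsUniform.isPrime_annihilator (hI : I.IsUniform) (hne : I ≠ ⊥) :
    I.annihilator.IsPrime := by
  refine ⟨annihilator_eq_top_iff.not.mpr hne, fun {a b} hab ↦ ?_⟩
  have hle : ∀ c, Ideal.span {c} * I ≤ I := fun c ↦ Ideal.mul_le_right
  have hdisj : Disjoint (Ideal.span {a} * I) (Ideal.span {b} * I) := by
    refine disjoint_def.mpr fun x hxa hxb ↦ ?_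
    obtain ⟨y, hy, rfl⟩ := Ideal.mem_span_singleton_mul.mp hxa
    obtain ⟨z, -, hz⟩ := Ideal.mem_span_singleton_mul.mp hxb
    refine IsReduced.eq_zero _ ⟨2, ?_⟩
    calc (a * y) ^ 2 = (a * b) * (y * z) := by rw [sq]; nth_rewrite 2 [← hz]; ring
      _ = 0 := mem_annihilator.mp hab _ (I.mul_mem_right z hy)
  have hbot : ∀ c, Ideal.span {c} * I = ⊥ → c ∈ I.annihilator := fun c hc ↦
    mem_annihilator.mpr fun n hn ↦ by
      simpa [hc] using Ideal.mul_mem_mul (Ideal.mem_span_singleton_self c) hn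
  exact (hI _ (hle a) _ (hle b) hdisj).imp (hbot a) (hbot b)

theorem annihilator_eq_bot_of_isEssentialIn_top (h : IsEssentialIn I ⊤) : I.annihilator = ⊥ := by
  refine eq_bot_iff.mpr fun a ha ↦ ?_
  have : Ideal.span {a} = ⊥ := h.2 _ le_top <| disjoint_def.mpr fun x hxa hxI ↦ by
    obtain ⟨r, rfl⟩ := Ideal.mem_span_singleton'.mp hxa
    refine IsReduced.eq_zero _ ⟨2, ?_⟩
    calc (r * a) ^ 2 = r * (a * (r * a)) := by ring
      _ = 0 := by rw [← smul_eq_mul a, mem_annihilator.mp ha _ hxI, mul_zero]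
  exact Ideal.span_singleton_eq_bot.mp this

end Submodule

theorem Ideal.minimalPrimes_subset_range_of_iInf_eq_bot {R ι : Type*} [CommSemiring R] [Finite ι]
    {P : ι → Ideal R} (hP : ∀ i, (P i).IsPrime) (h : ⨅ i, P i = ⊥) :
    minimalPrimes R ⊆ Set.range P := by
  have := Fintype.ofFinite ι
  intro p hp
  have hle : Finset.univ.inf P ≤ p := by rw [Finset.inf_univ_eq_iInf, h]; exact bot_le
  obtain ⟨i, -, hi⟩ := hp.1.1.inf_le'.mp hle
  exact ⟨i, le_antisymm hi (hp.2 ⟨hP i, bot_le⟩ hi)⟩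

/-- A reduced commutative ring of finite Goldie dimension (as a module over
itself) has only finitely many minimal primes. -/
theorem minimalPrimes_finite_of_reduced_finiteGoldieDimension (R : Type u) [CommRing R]
    [IsReduced R] (h : HasFiniteGoldieDimension R R) :
    (minimalPrimes R).Finite := by
  obtain ⟨E, f, ⟨-, hf, hess⟩, n, D, hD, hDi⟩ := h
  set I : Fin n → Ideal R := fun i ↦ (D i).comap f
  have hI_uniform i : (I i).IsUniform := by
    have := (hDi i).1
    simpa only [Submodule.map_subtype_top] using
      (((hDi i).2.isUniform_top).map (D i).injective_subtype).comap hf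
  have hrange : IsEssentialIn (LinearMap.range f) ⊤ :=
    ⟨le_top, fun N _ hN ↦ not_not.mp fun hne ↦ hess N hne (disjoint_iff.mp hN)⟩
  have hI_ne i : I i ≠ ⊥ := by
    have := (hDi i).2.1
    intro h₀
    refine hess (D i) (Submodule.nontrivial_iff_ne_bot.mp inferInstance) ?_
    rw [inf_comm, ← Submodule.map_comap_eq, show (D i).comap f = ⊥ from h₀, Submodule.map_bot]
  refine (Set.finite_range fun i ↦ (I i).annihilator).subset <|
    Ideal.minimalPrimes_subset_range_of_iInf_eq_bot
      (fun i ↦ (hI_uniform i).isPrime_annihilator (hI_ne i)) ?_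
  rw [← Submodule.annihilator_iSup]
  exact Submodule.annihilator_eq_bot_of_isEssentialIn_top <|
    Submodule.isEssentialIn_iSup_comap hD.submodule_iSupIndep hD.submodule_iSup_eq_top hf hrange
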